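/- arXiv:2403.07633 — 2 statements merged into one kernel-verified Lean document; each statement's English description precedes it below -/
import Mathlib

section
/- Fix an integer i ≥ 1, let β_l(x) = T̂_i'δ_x([l/(i+l), (l+1)/(i+l+1))) and γ_l(x) = T̂_i'^2 δ_x([l/(i+l), (l+1)/(i+l+1))), and let j_x be the unique nonnegative integer with x ∈ [j_x/(i+j_x), (j_x+1)/(i+j_x+1)). Then for every r ∈ (0,1) there exist a constant c > 0 and u ∈ (0,1) such that γ_l(x) ≥ c · β_l(x) for all x ∈ (u, 1) and all integers l with ⌊(1−r) j_x⌋ ≤ l ≤ j_x. -/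
open MeasureTheory Filter Set

/-- The transition density `k_i(x,y)` of the generalized Kantorovich operator `T̂_i`
with respect to Lebesgue measure on `[0,1)`. -/
noncomputable def kantKernel (i : ℕ) (x y : ℝ) : ℝ :=
  ((i : ℝ) + 1) * (1 - x) ^ i *
    ∑' j : ℕ, (Nat.choose (i + j + 1) j : ℝ) * x ^ j *
      Set.indicator (Set.Ico ((j : ℝ) / ((i : ℝ) + j)) (((j : ℝ) + 1) / ((i : ℝ) + (j : ℝ) + 1)))
        (fun _ => (1 : ℝ)) y

/-- The transition probability `T̂_i'δ_x` of the generalized Kantorovich operator. -/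
noncomputable def kantTrans (i : ℕ) (x : ℝ) : Measure ℝ :=
  if x = 1 then Measure.dirac 1
  else (volume.restrict (Set.Ico (0:ℝ) 1)).withDensity
    (fun y => ENNReal.ofReal (kantKernel i x y))

/-- `β_l(x) = T̂_i'δ_x([l/(i+l), (l+1)/(i+l+1)))`. -/
noncomputable def betaKant (i l : ℕ) (x : ℝ) : ℝ :=
  ((kantTrans i x) (Set.Ico ((l:ℝ)/((i:ℝ)+l)) (((l:ℝ)+1)/((i:ℝ)+(l:ℝ)+1)))).toReal

/-- `γ_l(x) = T̂_i'^2δ_x([l/(i+l), (l+1)/(i+l+1)))`, where `T̂_i'^2δ_x = T̂_i'(T̂_i'δ_x)`. -/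
noncomputable def gammaKant (i l : ℕ) (x : ℝ) : ℝ :=
  (((kantTrans i x).bind (kantTrans i))
    (Set.Ico ((l:ℝ)/((i:ℝ)+l)) (((l:ℝ)+1)/((i:ℝ)+(l:ℝ)+1)))).toReal

set_option maxHeartbeats 1000000

noncomputable def knt (i m : ℕ) : ℝ := (m:ℝ)/((i:ℝ)+m)

def Ikt (i m : ℕ) : Set ℝ := Set.Ico (knt i m) (knt i (m+1))

noncomputable def Bk (i m : ℕ) (x : ℝ) : ℝ :=
  (Nat.choose (i+m-1) m : ℝ) * x^m * (1-x)^i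

noncomputable def coefK (i m : ℕ) (x : ℝ) : ℝ :=
  ((i:ℝ)+1) * (1-x)^i * (Nat.choose (i+m+1) m : ℝ) * x^m

lemma Ikt_eq (i l : ℕ) :
    Set.Ico ((l:ℝ)/((i:ℝ)+l) : ℝ) (((l:ℝ)+1)/((i:ℝ)+(l:ℝ)+1)) = Ikt i l := by
  simp only [Ikt, knt]
  push_cast
  ring_nf

variable {i : ℕ}

lemma denom_pos (hi : 1 ≤ i) (m : ℕ) : (0:ℝ) < (i:ℝ) + m := by
  have : (1:ℝ) ≤ (i:ℝ) := by exact_mod_cast hi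
  positivity

lemma knt_nonneg (hi : 1 ≤ i) (m : ℕ) : 0 ≤ knt i m :=
  div_nonneg (Nat.cast_nonneg m) (denom_pos hi m).le

lemma knt_lt_one (hi : 1 ≤ i) (m : ℕ) : knt i m < 1 := by
  rw [knt, div_lt_one (denom_pos hi m)]
  have : (1:ℝ) ≤ (i:ℝ) := by exact_mod_cast hi
  linarith

lemma one_sub_knt (hi : 1 ≤ i) (m : ℕ) : 1 - knt i m = (i:ℝ)/((i:ℝ)+m) := by
  rw [knt, eq_div_iff (denom_pos hi m).ne', sub_mul, div_mul_cancel₀ _ (denom_pos hi m).ne']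
  ring

lemma knt_mono (hi : 1 ≤ i) {m n : ℕ} (h : m ≤ n) : knt i m ≤ knt i n := by
  rw [knt, knt, div_le_div_iff₀ (denom_pos hi m) (denom_pos hi n)]
  have h' : (m:ℝ) ≤ n := by exact_mod_cast h
  have : (1:ℝ) ≤ (i:ℝ) := by exact_mod_cast hi
  nlinarith [Nat.cast_nonneg (α := ℝ) m]

lemma knt_strict (hi : 1 ≤ i) (m : ℕ) : knt i m < knt i (m+1) := by
  rw [knt, knt, div_lt_div_iff₀ (denom_pos hi m) (denom_pos hi (m+1))]
  have : (1:ℝ) ≤ (i:ℝ) := by exact_mod_cast hi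
  push_cast
  nlinarith [Nat.cast_nonneg (α := ℝ) m]

lemma Ikt_subset (hi : 1 ≤ i) (m : ℕ) : Ikt i m ⊆ Set.Ico (0:ℝ) 1 := fun y hy =>
  ⟨le_trans (knt_nonneg hi m) hy.1, lt_of_lt_of_le hy.2 (knt_lt_one hi (m+1)).le⟩

lemma Ikt_disjoint (hi : 1 ≤ i) {m j : ℕ} {y : ℝ} (hy : y ∈ Ikt i m) (hne : j ≠ m) :
    y ∉ Ikt i j := by
  intro hj
  rcases lt_or_gt_of_ne hne with h | h
  · exact absurd hy.1 (not_le.2 (lt_of_lt_of_le hj.2 (knt_mono hi h)))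
  · exact absurd hj.1 (not_le.2 (lt_of_lt_of_le hy.2 (knt_mono hi h)))

lemma exists_mem_Ikt (hi : 1 ≤ i) {y : ℝ} (hy : y ∈ Set.Ico (0:ℝ) 1) :
    ∃ m, y ∈ Ikt i m := by
  have h1y : 0 < 1 - y := by linarith [hy.2]
  refine ⟨Nat.floor (y * i / (1 - y)), ?_, ?_⟩
  · rw [knt, div_le_iff₀ (denom_pos hi _)]
    have hfl : (Nat.floor (y * i / (1 - y)) : ℝ) ≤ y * i / (1 - y) :=
      Nat.floor_le (div_nonneg (mul_nonneg hy.1 (Nat.cast_nonneg i)) h1y.le)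
    rw [le_div_iff₀ h1y] at hfl
    nlinarith
  · rw [knt, lt_div_iff₀ (denom_pos hi _)]
    have hfl : y * i / (1 - y) < Nat.floor (y * i / (1 - y)) + 1 :=
      Nat.lt_floor_add_one _
    rw [div_lt_iff₀ h1y] at hfl
    push_cast
    nlinarith

lemma kantKernel_eq (hi : 1 ≤ i) {m : ℕ} {y : ℝ} (hy : y ∈ Ikt i m) (x : ℝ) :
    kantKernel i x y = coefK i m x := by
  have hterm : ∀ j : ℕ, j ≠ m →
      (Nat.choose (i + j + 1) j : ℝ) * x ^ j *
        Set.indicator (Set.Ico ((j : ℝ) / ((i : ℝ) + j)) (((j : ℝ) + 1) / ((i : ℝ) + (j : ℝ) + 1)))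
          (fun _ => (1 : ℝ)) y = 0 := by
    intro j hj
    rw [Ikt_eq, Set.indicator_of_notMem (Ikt_disjoint hi hy hj), mul_zero]
  rw [kantKernel, tsum_eq_single m (fun j hj => hterm j hj)]
  rw [Ikt_eq, Set.indicator_of_mem hy, coefK]
  ring

lemma choose_id (hi : 1 ≤ i) (m : ℕ) :
    (Nat.choose (i+m+1) m : ℝ) * ((i:ℝ) * ((i:ℝ)+1)) =
    (Nat.choose (i+m-1) m : ℝ) * (((i:ℝ)+(m:ℝ)) * ((i:ℝ)+(m:ℝ)+1)) := by
  obtain ⟨n, rfl⟩ := Nat.exists_eq_add_of_le hi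
  have h1 : 1 + n + m + 1 = n + m + 2 := by omega
  have h2 : 1 + n + m - 1 = n + m := by omega
  rw [h1, h2]
  rw [Nat.cast_choose ℝ (by omega : m ≤ n + m + 2), Nat.cast_choose ℝ (by omega : m ≤ n + m)]
  have h3 : n + m + 2 - m = n + 2 := by omega
  have h4 : n + m - m = n := by omega
  rw [h3, h4]
  have e1 : ((Nat.factorial (n+m+2)) : ℝ)
      = ((n:ℝ)+(m:ℝ)+2) * ((n:ℝ)+(m:ℝ)+1) * (Nat.factorial (n+m) : ℝ) := by
    rw [show n+m+2 = (n+m+1)+1 from rfl, Nat.factorial_succ, Nat.factorial_succ]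
    push_cast; ring
  have e2 : ((Nat.factorial (n+2)) : ℝ)
      = ((n:ℝ)+2) * ((n:ℝ)+1) * (Nat.factorial n : ℝ) := by
    rw [show n+2 = (n+1)+1 from rfl, Nat.factorial_succ, Nat.factorial_succ]
    push_cast; ring
  rw [e1, e2]
  have f1 : (Nat.factorial m : ℝ) ≠ 0 := Nat.cast_ne_zero.2 (Nat.factorial_ne_zero m)
  have f2 : (Nat.factorial n : ℝ) ≠ 0 := Nat.cast_ne_zero.2 (Nat.factorial_ne_zero n)
  have f3 : (Nat.factorial (n+m) : ℝ) ≠ 0 := Nat.cast_ne_zero.2 (Nat.factorial_ne_zero _)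
  field_simp
  push_cast
  ring

lemma Bk_nonneg (hi : 1 ≤ i) {x : ℝ} (hx : x ∈ Ico (0:ℝ) 1) (m : ℕ) : 0 ≤ Bk i m x := by
  have h1 : (0:ℝ) ≤ 1 - x := by linarith [hx.2]
  have := hx.1
  unfold Bk; positivity

lemma Bk_symm_choose (hi : 1 ≤ i) (m : ℕ) :
    (Nat.choose (i+m-1) m : ℝ) = (Nat.choose (m + (i-1)) (i-1) : ℝ) := by
  congr 1
  rw [show i + m - 1 = m + (i-1) by omega]
  exact Nat.choose_symm_add

lemma summable_Bk (hi : 1 ≤ i) {x : ℝ} (hx : x ∈ Ico (0:ℝ) 1) :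
    Summable (fun m => Bk i m x) := by
  have hx' : ‖x‖ < 1 := by rw [Real.norm_eq_abs, abs_of_nonneg hx.1]; exact hx.2
  have := (summable_choose_mul_geometric_of_norm_lt_one (R := ℝ) (i-1) hx').mul_right ((1-x)^i)
  refine this.congr (fun m => ?_)
  simp only [Bk]
  rw [Bk_symm_choose hi]

lemma tsum_Bk (hi : 1 ≤ i) {x : ℝ} (hx : x ∈ Ico (0:ℝ) 1) :
    ∑' m, Bk i m x = 1 := by
  have hx' : ‖x‖ < 1 := by rw [Real.norm_eq_abs, abs_of_nonneg hx.1]; exact hx.2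
  have h1x : (0:ℝ) < 1 - x := by linarith [hx.2]
  calc ∑' m, Bk i m x
      = (∑' m, ((m + (i-1)).choose (i-1) : ℝ) * x ^ m) * (1-x)^i := by
        rw [← tsum_mul_right]
        exact tsum_congr (fun m => by simp only [Bk]; rw [Bk_symm_choose hi])
    _ = 1 / (1-x)^((i-1)+1) * (1-x)^i := by
        rw [tsum_choose_mul_geometric_of_norm_lt_one (i-1) hx']
    _ = 1 := by
        rw [show (i-1)+1 = i by omega]
        field_simp

lemma Bk_le_one (hi : 1 ≤ i) {x : ℝ} (hx : x ∈ Ico (0:ℝ) 1) (m : ℕ) : Bk i m x ≤ 1 := by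
  rw [← tsum_Bk hi hx]
  exact Summable.le_tsum (summable_Bk hi hx) m (fun j _ => Bk_nonneg hi hx j)

lemma mul_Bk_succ (x : ℝ) (t : ℕ) :
    ((t:ℝ)+1) * Bk i (t+1) x = ((i:ℝ) * x * (1-x)^i) * ((Nat.choose (t+i) i : ℝ) * x^t) := by
  have h : Nat.choose (i+t) (t+1) * (t+1) = Nat.choose (t+i) i * i := by
    have h0 := Nat.choose_succ_right_eq (i+t) t
    rw [show i+t-t = i by omega] at h0
    rw [h0, show i+t = t+i by omega, Nat.choose_symm_add]
  have hc : ((Nat.choose (i+t) (t+1) : ℝ)) * ((t:ℝ)+1) = (Nat.choose (t+i) i : ℝ) * (i:ℝ) := by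
    exact_mod_cast h
  simp only [Bk, show i+(t+1)-1 = i+t by omega]
  linear_combination (x^(t+1) * (1-x)^i) * hc

lemma summable_mul_Bk (hi : 1 ≤ i) {x : ℝ} (hx : x ∈ Ico (0:ℝ) 1) :
    Summable (fun m : ℕ => (m:ℝ) * Bk i m x) := by
  have hx' : ‖x‖ < 1 := by rw [Real.norm_eq_abs, abs_of_nonneg hx.1]; exact hx.2
  have hs := (summable_choose_mul_geometric_of_norm_lt_one (R := ℝ) i hx').mul_left
    ((i:ℝ) * x * (1-x)^i)
  have h1 : Summable (fun t : ℕ => ((t:ℝ)+1) * Bk i (t+1) x) :=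
    hs.congr (fun t => (mul_Bk_succ x t).symm)
  have h2 : Summable (fun t : ℕ => (((t+1:ℕ)):ℝ) * Bk i (t+1) x) :=
    h1.congr (fun t => by push_cast; ring)
  exact (summable_nat_add_iff 1).mp h2

lemma tsum_mul_Bk (hi : 1 ≤ i) {x : ℝ} (hx : x ∈ Ico (0:ℝ) 1) :
    ∑' m : ℕ, (m:ℝ) * Bk i m x = (i:ℝ) * x / (1-x) := by
  have hx' : ‖x‖ < 1 := by rw [Real.norm_eq_abs, abs_of_nonneg hx.1]; exact hx.2
  have h1x : (0:ℝ) < 1 - x := by linarith [hx.2]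
  rw [Summable.tsum_eq_zero_add (summable_mul_Bk hi hx)]
  have e0 : ((0:ℕ):ℝ) * Bk i 0 x = 0 := by simp
  rw [e0, zero_add]
  calc ∑' t : ℕ, (((t+1:ℕ)):ℝ) * Bk i (t+1) x
      = ∑' t : ℕ, ((i:ℝ) * x * (1-x)^i) * ((Nat.choose (t+i) i : ℝ) * x^t) :=
        tsum_congr (fun t => by rw [← mul_Bk_succ x t]; push_cast; ring)
    _ = ((i:ℝ) * x * (1-x)^i) * ∑' t : ℕ, ((Nat.choose (t+i) i : ℝ) * x^t) := tsum_mul_left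
    _ = ((i:ℝ) * x * (1-x)^i) * (1 / (1-x)^(i+1)) := by
        rw [tsum_choose_mul_geometric_of_norm_lt_one i hx']
    _ = (i:ℝ) * x / (1-x) := by
        rw [pow_succ]
        field_simp

lemma tail_lower (hi : 1 ≤ i) {x : ℝ} (hx : x ∈ Ico (0:ℝ) 1) (j : ℕ) :
    x ^ j ≤ ∑' t : ℕ, Bk i (t+j) x := by
  have hsum := summable_Bk hi hx
  have htail : Summable (fun t : ℕ => Bk i (t+j) x) := (summable_nat_add_iff j).mpr hsum
  have hterm : ∀ t : ℕ, x ^ j * Bk i t x ≤ Bk i (t+j) x := by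
    intro t
    simp only [Bk]
    have hch : (Nat.choose (i+t-1) t : ℝ) ≤ (Nat.choose (i+(t+j)-1) (t+j) : ℝ) := by
      have h : Nat.choose (i+t-1) t ≤ Nat.choose (i+(t+j)-1) (t+j) := by
        rw [show i+t-1 = t+(i-1) by omega, show i+(t+j)-1 = (t+j)+(i-1) by omega,
          Nat.choose_symm_add, Nat.choose_symm_add]
        exact Nat.choose_le_choose _ (by omega)
      exact_mod_cast h
    have h1 : (0:ℝ) ≤ x := hx.1
    have h2 : (0:ℝ) ≤ 1 - x := by linarith [hx.2]
    calc x^j * ((Nat.choose (i+t-1) t:ℝ) * x^t * (1-x)^i)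
        = (Nat.choose (i+t-1) t:ℝ) * x^(t+j) * (1-x)^i := by rw [pow_add]; ring
      _ ≤ (Nat.choose (i+(t+j)-1) (t+j):ℝ) * x^(t+j) * (1-x)^i :=
          mul_le_mul_of_nonneg_right
            (mul_le_mul_of_nonneg_right hch (by positivity)) (by positivity)
  calc x ^ j = x^j * ∑' t:ℕ, Bk i t x := by rw [tsum_Bk hi hx, mul_one]
    _ = ∑' t:ℕ, x^j * Bk i t x := by rw [tsum_mul_left]
    _ ≤ ∑' t:ℕ, Bk i (t+j) x := Summable.tsum_le_tsum hterm (hsum.mul_left _) htail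

lemma tail_upper (hi : 1 ≤ i) {x : ℝ} (hx : x ∈ Ico (0:ℝ) 1) {M : ℕ} (hM : 1 ≤ M) :
    ∑' t : ℕ, Bk i (t+M) x ≤ ((i:ℝ) * x / (1-x)) / M := by
  have hsum := summable_Bk hi hx
  have hmul := summable_mul_Bk hi hx
  have htail : Summable (fun t : ℕ => Bk i (t+M) x) := (summable_nat_add_iff M).mpr hsum
  have htailm : Summable (fun t : ℕ => ((t+M:ℕ):ℝ) * Bk i (t+M) x) :=
    (summable_nat_add_iff M).mpr hmul
  have hMpos : (0:ℝ) < M := by exact_mod_cast hM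
  rw [le_div_iff₀ hMpos, ← tsum_mul_right]
  have step1 : ∀ t:ℕ, Bk i (t+M) x * M ≤ ((t+M:ℕ):ℝ) * Bk i (t+M) x := by
    intro t
    have h : (M:ℝ) ≤ ((t+M:ℕ):ℝ) := by exact_mod_cast Nat.le_add_left M t
    nlinarith [Bk_nonneg hi hx (t+M)]
  calc ∑' t:ℕ, Bk i (t+M) x * M
      ≤ ∑' t:ℕ, ((t+M:ℕ):ℝ) * Bk i (t+M) x := Summable.tsum_le_tsum step1 (htail.mul_right _) htailm
    _ ≤ ∑' m:ℕ, (m:ℝ) * Bk i m x := by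
        have h := Summable.sum_add_tsum_nat_add (f := fun m : ℕ => (m:ℝ) * Bk i m x) M hmul
        have hnn : 0 ≤ ∑ k ∈ Finset.range M, (k:ℝ) * Bk i k x :=
          Finset.sum_nonneg (fun k _ => mul_nonneg (Nat.cast_nonneg k) (Bk_nonneg hi hx k))
        linarith
    _ = (i:ℝ) * x / (1-x) := tsum_mul_Bk hi hx

lemma window_sum (hi : 1 ≤ i) {x : ℝ} (hx : x ∈ Ico (0:ℝ) 1) {j M : ℕ} (hjM : j ≤ M) :
    ∑ m ∈ Finset.Ico j M, Bk i m x
      = (∑' t:ℕ, Bk i (t+j) x) - (∑' t:ℕ, Bk i (t+M) x) := by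
  have h1 := Summable.sum_add_tsum_nat_add (f := fun m => Bk i m x) j (summable_Bk hi hx)
  have h2 := Summable.sum_add_tsum_nat_add (f := fun m => Bk i m x) M (summable_Bk hi hx)
  rw [Finset.sum_Ico_eq_sub _ hjM]
  linarith

lemma exp_bound_knt (hi : 1 ≤ i) {j : ℕ} (hj : 1 ≤ j) :
    ((3:ℝ))⁻¹^i ≤ (knt i j)^j := by
  have ja : (0:ℝ) < (j:ℝ) := by exact_mod_cast hj
  have hb : (0:ℝ) ≤ (i:ℝ) := Nat.cast_nonneg i
  have hpos : (0:ℝ) < (i:ℝ) + (j:ℝ) := by linarith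
  have key : (((i:ℝ)+(j:ℝ))/(j:ℝ))^j ≤ 3^i := by
    have e1 : ((i:ℝ)+(j:ℝ))/(j:ℝ) = (i:ℝ)/(j:ℝ) + 1 := by field_simp
    have e2 : (i:ℝ)/(j:ℝ) + 1 ≤ Real.exp ((i:ℝ)/(j:ℝ)) := Real.add_one_le_exp _
    calc (((i:ℝ)+(j:ℝ))/(j:ℝ))^j ≤ Real.exp ((i:ℝ)/(j:ℝ))^j := by
          apply pow_le_pow_left₀ (by positivity) (by rw [e1]; exact e2)
      _ = Real.exp ((j:ℝ) * ((i:ℝ)/(j:ℝ))) := (Real.exp_nat_mul _ j).symm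
      _ = Real.exp ((i:ℝ)) := by rw [mul_div_cancel₀ _ ja.ne']
      _ = Real.exp 1 ^ i := by
          rw [← Real.exp_nat_mul]; norm_num
      _ ≤ 3^i := pow_le_pow_left₀ (Real.exp_pos 1).le
          (Real.exp_one_lt_d9.le.trans (by norm_num)) i
  have hkpos : (0:ℝ) < (((i:ℝ)+(j:ℝ))/(j:ℝ))^j := by positivity
  have hinv : ((3:ℝ)^i)⁻¹ ≤ ((((i:ℝ)+(j:ℝ))/(j:ℝ))^j)⁻¹ :=
    inv_anti₀ hkpos key
  calc ((3:ℝ))⁻¹^i = ((3:ℝ)^i)⁻¹ := by rw [inv_pow]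
    _ ≤ ((((i:ℝ)+(j:ℝ))/(j:ℝ))^j)⁻¹ := hinv
    _ = (knt i j)^j := by
        rw [← inv_pow, inv_div]
        rfl

lemma window_lb (hi : 1 ≤ i) {x : ℝ} {j : ℕ} (hj : 1 ≤ j) (hx : x ∈ Ikt i j) :
    ((3:ℝ))⁻¹^i / 2 ≤ ∑ m ∈ Finset.Ico j (4*3^i*j+1), Bk i m x := by
  set K := 4*3^i with hK
  set M := K*j+1 with hM
  have hKj : 0 < K := by positivity
  have hjM : j ≤ M := by
    calc j ≤ K*j := Nat.le_mul_of_pos_left j (by positivity)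
      _ ≤ M := Nat.le_succ _
  have hx01 : x ∈ Ico (0:ℝ) 1 := Ikt_subset hi j hx
  have h1x : (0:ℝ) < 1 - x := by linarith [hx01.2]
  -- lower bound for tail at j
  have hlow : ((3:ℝ))⁻¹^i ≤ ∑' t:ℕ, Bk i (t+j) x := by
    calc ((3:ℝ))⁻¹^i ≤ (knt i j)^j := exp_bound_knt hi hj
      _ ≤ x^j := pow_le_pow_left₀ (knt_nonneg hi j) hx.1 j
      _ ≤ ∑' t:ℕ, Bk i (t+j) x := tail_lower hi hx01 j
  -- upper bound for tail at M
  have hup : ∑' t:ℕ, Bk i (t+M) x ≤ ((3:ℝ))⁻¹^i / 2 := by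
    have hMre : (1:ℝ) ≤ (M:ℝ) := by exact_mod_cast Nat.succ_le_succ (Nat.zero_le (K*j))
    have h0 : ∑' t:ℕ, Bk i (t+M) x ≤ ((i:ℝ) * x / (1-x)) / M :=
      tail_upper hi hx01 (Nat.succ_le_succ (Nat.zero_le (K*j)))
    have hmean : (i:ℝ) * x / (1-x) ≤ (j:ℝ) + 1 := by
      have hxu : x < knt i (j+1) := hx.2
      rw [knt] at hxu
      rw [lt_div_iff₀ (denom_pos hi (j+1))] at hxu
      push_cast at hxu
      rw [div_le_iff₀ h1x]
      nlinarith
    have hKpos : (0:ℝ) < (K:ℝ) := by exact_mod_cast hKj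
    have hMpos : (0:ℝ) < (M:ℝ) := by exact_mod_cast Nat.succ_le_succ (Nat.zero_le (K*j))
    have h2 : ((i:ℝ) * x / (1-x)) / M ≤ ((j:ℝ)+1) / (M:ℝ) := by gcongr
    have h3 : ((j:ℝ)+1) / (M:ℝ) ≤ 2 / (K:ℝ) := by
      rw [div_le_div_iff₀ hMpos hKpos]
      have hMc : ((M:ℕ):ℝ) = (K:ℝ)*(j:ℝ)+1 := by rw [hM]; push_cast; ring
      have hjc : (1:ℝ) ≤ (j:ℝ) := by exact_mod_cast hj
      have hKc : (1:ℝ) ≤ (K:ℝ) := by exact_mod_cast hKj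
      rw [hMc]
      nlinarith
    have h4 : (2:ℝ) / (K:ℝ) = ((3:ℝ))⁻¹^i / 2 := by
      have hKc : (K:ℝ) = 4*(3:ℝ)^i := by rw [hK]; push_cast; ring
      have h3i : (0:ℝ) < (3:ℝ)^i := by positivity
      rw [hKc, inv_pow]
      field_simp
      ring
    calc ∑' t:ℕ, Bk i (t+M) x ≤ ((i:ℝ) * x / (1-x)) / M := h0
      _ ≤ ((j:ℝ)+1) / (M:ℝ) := h2
      _ ≤ 2 / (K:ℝ) := h3
      _ = ((3:ℝ))⁻¹^i / 2 := h4
  have hws := window_sum hi hx01 hjM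
  rw [hws]
  linarith

variable {x : ℝ}

lemma measurableSet_Ikt (i m : ℕ) : MeasurableSet (Ikt i m) := measurableSet_Ico

lemma coefK_nonneg {x : ℝ} (hx : x ∈ Ico (0:ℝ) 1) (m : ℕ) : 0 ≤ coefK i m x := by
  have h1 : (0:ℝ) ≤ x := hx.1
  have h2 : (0:ℝ) ≤ 1 - x := by linarith [hx.2]
  unfold coefK; positivity

lemma kantTrans_apply' (hx : x ∈ Ico (0:ℝ) 1) {s : Set ℝ} (hs : MeasurableSet s) :
    kantTrans i x s = ∫⁻ y in s ∩ Ico (0:ℝ) 1, ENNReal.ofReal (kantKernel i x y) := by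
  rw [kantTrans, if_neg (ne_of_lt hx.2), withDensity_apply _ hs, Measure.restrict_restrict hs]

lemma knt_gap (hi : 1 ≤ i) (l : ℕ) :
    knt i (l+1) - knt i l = (i:ℝ)/(((i:ℝ)+(l:ℝ))*((i:ℝ)+(l:ℝ)+1)) := by
  have h1 := denom_pos hi l
  have h2 := denom_pos hi (l+1)
  push_cast at h2
  rw [knt, knt]
  push_cast
  field_simp
  ring

lemma coefK_gap (hi : 1 ≤ i) (l : ℕ) (x : ℝ) :
    coefK i l x * (knt i (l+1) - knt i l) = Bk i l x := by
  rw [knt_gap hi l, coefK, Bk]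
  have h1 := denom_pos hi l
  have h2 : (0:ℝ) < (i:ℝ)+(l:ℝ)+1 := by linarith
  have hid := choose_id hi l
  field_simp
  linear_combination ((1-x)^i * x^l) * hid

lemma kantTrans_Ikt (hi : 1 ≤ i) {x : ℝ} (hx : x ∈ Ico (0:ℝ) 1) (l : ℕ) :
    kantTrans i x (Ikt i l) = ENNReal.ofReal (Bk i l x) := by
  have hs : MeasurableSet (Ikt i l) := measurableSet_Ikt i l
  rw [kantTrans_apply' hx hs, inter_eq_left.mpr (Ikt_subset hi l)]
  have hcongr : ∫⁻ y in Ikt i l, ENNReal.ofReal (kantKernel i x y)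
      = ∫⁻ _ in Ikt i l, ENNReal.ofReal (coefK i l x) :=
    setLIntegral_congr_fun hs (fun y hy => by rw [kantKernel_eq hi hy x])
  rw [hcongr, setLIntegral_const]
  show ENNReal.ofReal (coefK i l x) * volume (Ico (knt i l) (knt i (l+1))) = _
  rw [Real.volume_Ico, ← ENNReal.ofReal_mul (coefK_nonneg hx l), coefK_gap hi l x]

lemma betaKant_eq (hi : 1 ≤ i) {x : ℝ} (hx : x ∈ Ico (0:ℝ) 1) (l : ℕ) :
    betaKant i l x = Bk i l x := by
  rw [betaKant, Ikt_eq, kantTrans_Ikt hi hx l, ENNReal.toReal_ofReal (Bk_nonneg hi hx l)]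

lemma ofReal_kernel_tsum (hi : 1 ≤ i) {y : ℝ} (hy : y ∈ Ico (0:ℝ) 1) (x : ℝ) :
    ENNReal.ofReal (kantKernel i x y)
      = ∑' m, (Ikt i m).indicator (fun _ => ENNReal.ofReal (coefK i m x)) y := by
  obtain ⟨m, hm⟩ := exists_mem_Ikt hi hy
  rw [kantKernel_eq hi hm x,
    tsum_eq_single m (fun j hj => indicator_of_notMem (Ikt_disjoint hi hm hj) _),
    indicator_of_mem hm]

lemma kantTrans_coe_eq (hi : 1 ≤ i) {x : ℝ} (hx : x ∈ Ico (0:ℝ) 1) {s : Set ℝ}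
    (hs : MeasurableSet s) :
    kantTrans i x s
      = ∑' m, ENNReal.ofReal (coefK i m x) * volume (Ikt i m ∩ (s ∩ Ico (0:ℝ) 1)) := by
  rw [kantTrans_apply' hx hs]
  have h1 : ∫⁻ y in s ∩ Ico (0:ℝ) 1, ENNReal.ofReal (kantKernel i x y)
      = ∫⁻ y in s ∩ Ico (0:ℝ) 1,
          ∑' m, (Ikt i m).indicator (fun _ => ENNReal.ofReal (coefK i m x)) y :=
    setLIntegral_congr_fun (hs.inter measurableSet_Ico)
      (fun y hy => ofReal_kernel_tsum hi hy.2 x)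
  rw [h1, lintegral_tsum (fun m =>
    (measurable_const.indicator (measurableSet_Ikt i m)).aemeasurable)]
  refine tsum_congr (fun m => ?_)
  rw [lintegral_indicator (measurableSet_Ikt i m),
    setLIntegral_const, Measure.restrict_apply (measurableSet_Ikt i m)]

lemma measurable_kantTrans_restr (hi : 1 ≤ i) :
    Measurable (fun x => if x ∈ Ico (0:ℝ) 1 then kantTrans i x else 0) := by
  apply Measure.measurable_of_measurable_coe
  intro s hs
  have hrw : (fun x => (if x ∈ Ico (0:ℝ) 1 then kantTrans i x else 0) s)
      = (Ico (0:ℝ) 1).indicator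
          (fun x => ∑' m, ENNReal.ofReal (coefK i m x) * volume (Ikt i m ∩ (s ∩ Ico (0:ℝ) 1))) := by
    funext x
    by_cases hx : x ∈ Ico (0:ℝ) 1
    · rw [if_pos hx, indicator_of_mem hx, kantTrans_coe_eq hi hx hs]
    · rw [if_neg hx, indicator_of_notMem hx]; rfl
  rw [hrw]
  apply Measurable.indicator _ measurableSet_Ico
  apply Measurable.ennreal_tsum
  intro m
  apply Measurable.mul_const
  apply Measurable.ennreal_ofReal
  unfold coefK
  exact (((measurable_const.mul ((measurable_const.sub measurable_id).pow_const i)).mul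
    measurable_const).mul (measurable_id.pow_const m))

lemma kantTrans_compl_null (hx : x ∈ Ico (0:ℝ) 1) :
    kantTrans i x ((Ico (0:ℝ) 1)ᶜ) = 0 := by
  rw [kantTrans_apply' hx measurableSet_Ico.compl, compl_inter_self]
  simp

lemma aemeasurable_kantTrans (hi : 1 ≤ i) {x : ℝ} (hx : x ∈ Ico (0:ℝ) 1) :
    AEMeasurable (kantTrans i) (kantTrans i x) := by
  refine ⟨fun z => if z ∈ Ico (0:ℝ) 1 then kantTrans i z else 0,
    measurable_kantTrans_restr hi, ?_⟩
  have hae : ∀ᵐ z ∂(kantTrans i x), z ∈ Ico (0:ℝ) 1 := by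
    rw [ae_iff]
    have : {z : ℝ | ¬ z ∈ Ico (0:ℝ) 1} = (Ico (0:ℝ) 1)ᶜ := rfl
    rw [this]
    exact kantTrans_compl_null hx
  filter_upwards [hae] with z hz
  rw [if_pos hz]

lemma Ikt_pairwise_disjoint (hi : 1 ≤ i) :
    Pairwise (Function.onFun Disjoint (Ikt i)) := by
  intro a b hab
  exact Set.disjoint_left.mpr (fun y hya hyb => (Ikt_disjoint hi hyb hab) hya)

lemma kantTrans_univ (hi : 1 ≤ i) {x : ℝ} (hx : x ∈ Ico (0:ℝ) 1) :
    kantTrans i x univ = 1 := by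
  have hsplit : kantTrans i x univ
      = kantTrans i x (Ico (0:ℝ) 1) + kantTrans i x ((Ico (0:ℝ) 1)ᶜ) :=
    (measure_add_measure_compl (measurableSet_Ico : MeasurableSet (Ico (0:ℝ) 1))).symm
  rw [hsplit, kantTrans_compl_null hx, add_zero]
  have hU : Ico (0:ℝ) 1 = ⋃ m, Ikt i m := by
    ext y
    constructor
    · exact fun hy => mem_iUnion.mpr (exists_mem_Ikt hi hy)
    · intro hy
      obtain ⟨m, hm⟩ := mem_iUnion.mp hy
      exact Ikt_subset hi m hm
  rw [hU, measure_iUnion (Ikt_pairwise_disjoint hi) (fun m => measurableSet_Ikt i m)]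
  calc ∑' m, kantTrans i x (Ikt i m)
      = ∑' m, ENNReal.ofReal (Bk i m x) := tsum_congr (fun m => kantTrans_Ikt hi hx m)
    _ = ENNReal.ofReal (∑' m, Bk i m x) :=
        (ENNReal.ofReal_tsum_of_nonneg (Bk_nonneg hi hx) (summable_Bk hi hx)).symm
    _ = 1 := by rw [tsum_Bk hi hx]; simp

lemma kantTrans_window_ge (hi : 1 ≤ i) {x : ℝ} (hx : x ∈ Ico (0:ℝ) 1) (j M : ℕ) :
    ENNReal.ofReal (∑ m ∈ Finset.Ico j M, Bk i m x)
      ≤ kantTrans i x (Ico (knt i j) (knt i M)) := by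
  have hsub : ∀ m ∈ Finset.Ico j M, Ikt i m ⊆ Ico (knt i j) (knt i M) := by
    intro m hm y hy
    rw [Finset.mem_Ico] at hm
    exact ⟨le_trans (knt_mono hi hm.1) hy.1, lt_of_lt_of_le hy.2 (knt_mono hi hm.2)⟩
  calc ENNReal.ofReal (∑ m ∈ Finset.Ico j M, Bk i m x)
      = ∑ m ∈ Finset.Ico j M, ENNReal.ofReal (Bk i m x) :=
        ENNReal.ofReal_sum_of_nonneg (fun m _ => Bk_nonneg hi hx m)
    _ = ∑ m ∈ Finset.Ico j M, kantTrans i x (Ikt i m) :=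
        Finset.sum_congr rfl (fun m _ => (kantTrans_Ikt hi hx m).symm)
    _ = kantTrans i x (⋃ m ∈ Finset.Ico j M, Ikt i m) :=
        (measure_biUnion_finset
          ((Ikt_pairwise_disjoint hi).set_pairwise _)
          (fun m _ => measurableSet_Ikt i m)).symm
    _ ≤ kantTrans i x (Ico (knt i j) (knt i M)) :=
        measure_mono (iUnion₂_subset hsub)

lemma Bk_antitoneOn (hi : 1 ≤ i) (l : ℕ) :
    AntitoneOn (fun t : ℝ => t^l * (1-t)^i) (Icc (knt i l) 1) := by
  apply antitoneOn_of_deriv_nonpos (convex_Icc _ _)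
  · exact ((continuous_pow l).mul ((continuous_const.sub continuous_id).pow i)).continuousOn
  · intro t _
    exact ((differentiable_pow l).differentiableAt.mul
      (((differentiable_const (1:ℝ)).sub differentiable_id).differentiableAt.pow i)).differentiableWithinAt
  · intro t ht
    rw [interior_Icc] at ht
    have htl : knt i l < t := ht.1
    have ht1 : t < 1 := ht.2
    have ht0 : 0 < t := lt_of_le_of_lt (knt_nonneg hi l) htl
    have h1t : 0 ≤ 1 - t := by linarith
    have hd1 : HasDerivAt (fun s : ℝ => s^l) ((l:ℝ) * t^(l-1)) t := hasDerivAt_pow l t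
    have hd2 : HasDerivAt (fun s : ℝ => (1-s)^i) ((i:ℝ) * (1-t)^(i-1) * (-1)) t := by
      exact (((hasDerivAt_id t).const_sub 1).pow i)
    have hd := hd1.mul hd2
    rw [show (fun t : ℝ => t^l * (1-t)^i) = ((fun s : ℝ => s^l) * fun s => (1-s)^i) from rfl, hd.deriv]
    have hkey : (l:ℝ) * (1 - t) ≤ (i:ℝ) * t := by
      have h := htl
      rw [knt, div_lt_iff₀ (denom_pos hi l)] at h
      nlinarith
    rcases Nat.eq_zero_or_pos l with rfl | hl
    · have h2 : (0:ℝ) ≤ (i:ℝ) * (1-t)^(i-1) := by positivity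
      simp only [Nat.cast_zero, zero_mul, pow_zero, one_mul]
      nlinarith
    · obtain ⟨l', rfl⟩ : ∃ l', l = l'+1 := ⟨l-1, by omega⟩
      obtain ⟨i', rfl⟩ : ∃ i', i = i'+1 := ⟨i-1, by omega⟩
      have hp : (0:ℝ) ≤ t^l' := by positivity
      have hq : (0:ℝ) ≤ (1-t)^i' := by positivity
      have key := mul_nonneg (mul_nonneg hp hq) (sub_nonneg.mpr hkey)
      simp only [Nat.add_sub_cancel]
      push_cast
      push_cast at key
      rw [pow_succ t l', pow_succ (1-t) i']
      nlinarith [key]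

lemma Bk_as_f (i l : ℕ) (t : ℝ) :
    Bk i l t = (Nat.choose (i+l-1) l : ℝ) * (t^l * (1-t)^i) := by
  rw [Bk]; ring

lemma Bk_ratio (hi : 1 ≤ i) {x y : ℝ} {j l K : ℕ} (hK : 1 ≤ K) (hl : l ≤ j)
    (hx : x ∈ Ikt i j) (hy : y ∈ Ico (knt i l) (knt i (K*j+1))) :
    (((K:ℝ)+1))⁻¹^i * Bk i l x ≤ Bk i l y := by
  have hx01 := Ikt_subset hi j hx
  have hy01 : y ∈ Ico (0:ℝ) 1 :=
    ⟨le_trans (knt_nonneg hi l) hy.1, lt_of_lt_of_le hy.2 (knt_lt_one hi _).le⟩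
  have hKpos : (0:ℝ) < (K:ℝ) := by exact_mod_cast hK
  have hC : (0:ℝ) ≤ (Nat.choose (i+l-1) l : ℝ) := Nat.cast_nonneg _
  have hcle : (((K:ℝ)+1))⁻¹^i ≤ 1 := by
    apply pow_le_one₀ (by positivity)
    rw [inv_le_one_iff₀]
    right; linarith
  rcases le_or_gt y x with hyx | hxy
  · -- y ≤ x : use antitonicity on [knt i l, 1]
    have ha : knt i l ≤ x := le_trans (knt_mono hi hl) hx.1
    have hf := Bk_antitoneOn hi l (a := y) (b := x)
      ⟨hy.1, le_trans hyx hx01.2.le⟩ ⟨ha, hx01.2.le⟩ hyx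
    have hBx : Bk i l x ≤ Bk i l y := by
      rw [Bk_as_f, Bk_as_f]
      exact mul_le_mul_of_nonneg_left hf hC
    have hBnn := Bk_nonneg hi hx01 l
    nlinarith
  · -- x < y
    have h1 : x^l ≤ y^l := pow_le_pow_left₀ hx01.1 hxy.le l
    have h2 : (((K:ℝ)+1))⁻¹ * (1-x) ≤ 1-y := by
      have hyu : y < knt i (K*j+1) := hy.2
      have e1 : 1 - knt i (K*j+1) = (i:ℝ)/((i:ℝ)+((K*j+1:ℕ):ℝ)) := one_sub_knt hi _
      have hylb : (i:ℝ)/((i:ℝ)+((K*j+1:ℕ):ℝ)) ≤ 1 - y := by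
        rw [← e1]; linarith
      have e2 : 1 - knt i j = (i:ℝ)/((i:ℝ)+(j:ℝ)) := one_sub_knt hi j
      have hxub : 1 - x ≤ (i:ℝ)/((i:ℝ)+(j:ℝ)) := by
        rw [← e2]; linarith [hx.1]
      have hip : (0:ℝ) < (i:ℝ) := by exact_mod_cast hi
      have hdj := denom_pos hi j
      have hdM := denom_pos hi (K*j+1)
      have hjnn : (0:ℝ) ≤ (j:ℝ) := Nat.cast_nonneg j
      have hcst : ((K*j+1:ℕ):ℝ) = (K:ℝ)*(j:ℝ)+1 := by push_cast; ring
      have hK1 : (0:ℝ) < (K:ℝ)+1 := by linarith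
      have hKle : (1:ℝ) ≤ (K:ℝ) := by exact_mod_cast hK
      have hile : (1:ℝ) ≤ (i:ℝ) := by exact_mod_cast hi
      rw [hcst] at hdM
      have hfrac : (((K:ℝ)+1))⁻¹ * ((i:ℝ)/((i:ℝ)+(j:ℝ)))
          ≤ (i:ℝ)/((i:ℝ)+((K*j+1:ℕ):ℝ)) := by
        rw [hcst, inv_mul_le_iff₀ hK1, ← mul_div_assoc, div_le_div_iff₀ hdj hdM]
        have hKi : (1:ℝ) ≤ (K:ℝ)*(i:ℝ) := by nlinarith
        nlinarith [mul_nonneg hip.le (show (0:ℝ) ≤ (K:ℝ)*(i:ℝ) + (j:ℝ) - 1 by linarith)]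
      calc (((K:ℝ)+1))⁻¹ * (1-x) ≤ (((K:ℝ)+1))⁻¹ * ((i:ℝ)/((i:ℝ)+(j:ℝ))) := by
            apply mul_le_mul_of_nonneg_left hxub (by positivity)
        _ ≤ (i:ℝ)/((i:ℝ)+((K*j+1:ℕ):ℝ)) := hfrac
        _ ≤ 1 - y := hylb
    have h1x : (0:ℝ) ≤ 1 - x := by linarith [hx01.2]
    have h1y : (0:ℝ) ≤ 1 - y := by linarith [hy01.2]
    have h2' : ((((K:ℝ)+1))⁻¹ * (1-x))^i ≤ (1-y)^i :=
      pow_le_pow_left₀ (mul_nonneg (by positivity) h1x) h2 i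
    have hrw : ((((K:ℝ)+1))⁻¹ * (1-x))^i = (((K:ℝ)+1))⁻¹^i * (1-x)^i := mul_pow _ _ i
    rw [Bk, Bk]
    have hxl : (0:ℝ) ≤ x^l := pow_nonneg hx01.1 l
    have hcx : (0:ℝ) ≤ (Nat.choose (i+l-1) l : ℝ) * x^l := mul_nonneg hC hxl
    calc (((K:ℝ)+1))⁻¹^i * ((Nat.choose (i+l-1) l : ℝ) * x^l * (1-x)^i)
        = ((Nat.choose (i+l-1) l : ℝ) * x^l) * ((((K:ℝ)+1))⁻¹^i * (1-x)^i) := by ring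
      _ ≤ ((Nat.choose (i+l-1) l : ℝ) * x^l) * (1-y)^i := by
          apply mul_le_mul_of_nonneg_left _ hcx
          rw [← hrw]; exact h2'
      _ ≤ ((Nat.choose (i+l-1) l : ℝ) * y^l) * (1-y)^i := by
          apply mul_le_mul_of_nonneg_right _ (pow_nonneg h1y i)
          exact mul_le_mul_of_nonneg_left h1 hC
      _ = (Nat.choose (i+l-1) l : ℝ) * y^l * (1-y)^i := by ring

lemma ae_mem_Ico01 (hx : x ∈ Ico (0:ℝ) 1) :
    ∀ᵐ z ∂(kantTrans i x), z ∈ Ico (0:ℝ) 1 := by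
  rw [ae_iff]
  have h : {z : ℝ | ¬ z ∈ Ico (0:ℝ) 1} = (Ico (0:ℝ) 1)ᶜ := rfl
  rw [h]
  exact kantTrans_compl_null hx

lemma gamma_ge (hi : 1 ≤ i) {x : ℝ} {j l : ℕ} (hj : 1 ≤ j) (hl : l ≤ j)
    (hx : x ∈ Ikt i j) :
    ((((4*3^i:ℕ):ℝ)+1)⁻¹^i * (((3:ℝ))⁻¹^i/2)) * Bk i l x ≤ gammaKant i l x := by
  set K := 4*3^i with hKdef
  have hK : 1 ≤ K := by rw [hKdef]; exact Nat.one_le_iff_ne_zero.mpr (by positivity)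
  set c' := (((K:ℕ):ℝ)+1)⁻¹^i with hc'
  set w := ((3:ℝ))⁻¹^i/2 with hw
  have hx01 := Ikt_subset hi j hx
  have hae := ae_mem_Ico01 (i := i) hx01
  set g : ℝ → Measure ℝ := fun z => if z ∈ Ico (0:ℝ) 1 then kantTrans i z else 0 with hg
  have haeg : (kantTrans i) =ᵐ[kantTrans i x] g := by
    filter_upwards [hae] with z hz
    rw [hg]
    simp only
    rw [if_pos hz]
  have hbind : (kantTrans i x).bind (kantTrans i) (Ikt i l)
      = ∫⁻ y, g y (Ikt i l) ∂(kantTrans i x) := by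
    have hbindeq : (kantTrans i x).bind (kantTrans i) = (kantTrans i x).bind g := by
      unfold Measure.bind
      rw [Measure.map_congr haeg]
    rw [hbindeq, Measure.bind_apply (measurableSet_Ikt i l) (measurable_kantTrans_restr hi).aemeasurable]
  have hcongr : ∫⁻ y, g y (Ikt i l) ∂(kantTrans i x)
      = ∫⁻ y, ENNReal.ofReal (Bk i l y) ∂(kantTrans i x) := by
    apply lintegral_congr_ae
    filter_upwards [hae] with y hy
    rw [hg]
    simp only
    rw [if_pos hy, kantTrans_Ikt hi hy l]
  set Y := Ico (knt i l) (knt i (K*j+1)) with hY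
  have hYm : MeasurableSet Y := measurableSet_Ico
  have hwin : ENNReal.ofReal w ≤ kantTrans i x Y := by
    calc ENNReal.ofReal w
        ≤ ENNReal.ofReal (∑ m ∈ Finset.Ico j (K*j+1), Bk i m x) :=
          ENNReal.ofReal_le_ofReal (window_lb hi hj hx)
      _ ≤ kantTrans i x (Ico (knt i j) (knt i (K*j+1))) :=
          kantTrans_window_ge hi hx01 j (K*j+1)
      _ ≤ kantTrans i x Y :=
          measure_mono (Ico_subset_Ico_left (knt_mono hi hl))
  have hptwise : ∀ y ∈ Y, ENNReal.ofReal (c' * Bk i l x) ≤ ENNReal.ofReal (Bk i l y) := by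
    intro y hy
    exact ENNReal.ofReal_le_ofReal (Bk_ratio hi hK hl hx hy)
  have hchain : ENNReal.ofReal (c' * Bk i l x) * ENNReal.ofReal w
      ≤ (kantTrans i x).bind (kantTrans i) (Ikt i l) := by
    rw [hbind, hcongr]
    calc ENNReal.ofReal (c' * Bk i l x) * ENNReal.ofReal w
        ≤ ENNReal.ofReal (c' * Bk i l x) * kantTrans i x Y := mul_le_mul_right hwin _
      _ = ∫⁻ _ in Y, ENNReal.ofReal (c' * Bk i l x) ∂(kantTrans i x) :=
          (setLIntegral_const Y _).symm
      _ ≤ ∫⁻ y in Y, ENNReal.ofReal (Bk i l y) ∂(kantTrans i x) :=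
          setLIntegral_mono' hYm hptwise
      _ ≤ ∫⁻ y, ENNReal.ofReal (Bk i l y) ∂(kantTrans i x) :=
          setLIntegral_le_lintegral Y _
  have hfin : (kantTrans i x).bind (kantTrans i) (Ikt i l) ≤ 1 := by
    rw [hbind, hcongr]
    calc ∫⁻ y, ENNReal.ofReal (Bk i l y) ∂(kantTrans i x)
        ≤ ∫⁻ _, 1 ∂(kantTrans i x) := by
          apply lintegral_mono_ae
          filter_upwards [hae] with y hy
          exact ENNReal.ofReal_le_one.mpr (Bk_le_one hi hy l)
      _ = kantTrans i x univ := by rw [lintegral_const, one_mul]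
      _ = 1 := kantTrans_univ hi hx01
  have hne : (kantTrans i x).bind (kantTrans i) (Ikt i l) ≠ ⊤ :=
    ne_top_of_le_ne_top ENNReal.one_ne_top hfin
  have htr := ENNReal.toReal_mono hne hchain
  have hc'nn : 0 ≤ c' := by positivity
  have hwnn : 0 ≤ w := by positivity
  have hBnn := Bk_nonneg hi hx01 l
  rw [← ENNReal.ofReal_mul (mul_nonneg hc'nn hBnn)] at htr
  rw [ENNReal.toReal_ofReal (mul_nonneg (mul_nonneg hc'nn hBnn) hwnn)] at htr
  have hgk : gammaKant i l x = ((kantTrans i x).bind (kantTrans i) (Ikt i l)).toReal := by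
    rw [gammaKant, Ikt_eq]
  rw [hgk]
  calc c' * w * Bk i l x = c' * Bk i l x * w := by ring
    _ ≤ _ := htr


/-- For every `r ∈ (0,1)` there are `c > 0` and `u ∈ (0,1)` with
`γ_l(x) ≥ c β_l(x)` for all `x ∈ (u,1)` and all `⌊(1−r)j_x⌋ ≤ l ≤ j_x`. -/
theorem gammaKant_lower_bound (i : ℕ) (hi : 1 ≤ i)
    (r : ℝ) (hr : r ∈ Set.Ioo (0:ℝ) 1)
    (jx : ℝ → ℕ)
    (hjx : ∀ x ∈ Set.Ico (0:ℝ) 1,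
      x ∈ Set.Ico ((jx x : ℝ)/((i:ℝ)+(jx x : ℝ))) (((jx x : ℝ)+1)/((i:ℝ)+(jx x : ℝ)+1))) :
    ∃ c > 0, ∃ u ∈ Set.Ioo (0:ℝ) 1, ∀ x ∈ Set.Ioo u 1, ∀ l : ℕ,
      Nat.floor ((1-r) * (jx x : ℝ)) ≤ l → l ≤ jx x →
      c * betaKant i l x ≤ gammaKant i l x := by
  refine ⟨(((4*3^i:ℕ):ℝ)+1)⁻¹^i * (((3:ℝ))⁻¹^i/2), by positivity, knt i 1,
    ⟨by rw [knt]; positivity, knt_lt_one hi 1⟩, ?_⟩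
  intro x hx l _ hlj
  have hx01 : x ∈ Set.Ico (0:ℝ) 1 :=
    ⟨le_of_lt (lt_of_le_of_lt (knt_nonneg hi 1) hx.1), hx.2⟩
  have hxI : x ∈ Ikt i (jx x) := by
    have h := hjx x hx01
    rwa [Ikt_eq] at h
  have hj1 : 1 ≤ jx x := by
    by_contra h
    have h0 : jx x = 0 := by omega
    rw [h0] at hxI
    exact absurd hxI.2 (not_lt.2 hx.1.le)
  rw [betaKant_eq hi hx01 l]
  exact gamma_ge hi hj1 hlj hxI
end

section
/- Let X be a compact Hausdorff space and T : C(X) → C(X) a Markov operator satisfying: (1) there exists an open dense subset X_λ ⊆ X such that X_λ ∋ x ↦ T'δ_x is continuous for the total variation norm and T'δ_x is concentrated on X_λ for x ∈ X_λ; (2) there exists a T-invariant Radon probability measure λ concentrated on X_λ such that ‖T'^m ν − λ‖_TV → 0 for every probability measure ν concentrated on X_λ. Then for every open set V with X \ X_λ ⊆ V, one has lim_{m→∞} sup_{f ∈ C(X), ‖f‖ ≤ 1} sup_{x ∈ X \ V} |T^{m+1} f(x) − T^m f(x)| = 0. -/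
/-!
Writing `(Tᵐ f)(x) = ∫ f d(T'ᵐ δₓ)`, the difference `Tᵐ⁺¹ f(x) − Tᵐ f(x)` is bounded by
`‖T'ᵐ⁺¹ δₓ − λ‖_TV + ‖T'ᵐ δₓ − λ‖_TV`, so it suffices that `T'ᵐ δₓ → λ` uniformly for `x` in the
compact set `X \ V ⊆ X_λ`. Convergence holds pointwise by (2), and it is locally uniform on `X_λ`:
`T'` is a total variation contraction, so `‖T'ᵐ δ_y − T'ᵐ δₓ‖_TV ≤ ‖T' δ_y − T' δₓ‖_TV` for `m ≥ 1`,
which is small for `y` near `x` by (1). On a compact set locally uniform convergence is uniform.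
-/

open MeasureTheory Filter Set

/-- The total variation distance between two Borel measures on a compact space,
`‖μ − ν‖_TV = sup {|∫ f dμ − ∫ f dν| : f ∈ C(X), ‖f‖ ≤ 1}`. -/
noncomputable def tvDist {X : Type*} [TopologicalSpace X] [CompactSpace X]
    [MeasurableSpace X] (μ ν : Measure X) : ℝ :=
  sSup { r : ℝ | ∃ f : C(X, ℝ), ‖f‖ ≤ 1 ∧ r = |(∫ x, f x ∂μ) - ∫ x, f x ∂ν| }

section TotalVariation

variable {X : Type*} [TopologicalSpace X] [CompactSpace X] [MeasurableSpace X]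

lemma abs_integral_le_one_of_norm_le_one [OpensMeasurableSpace X] {f : C(X, ℝ)} (hf : ‖f‖ ≤ 1)
    (μ : Measure X) [IsProbabilityMeasure μ] : |∫ x, f x ∂μ| ≤ 1 := by
  simpa using norm_integral_le_of_norm_le_const (μ := μ)
    (Eventually.of_forall fun x => (f.norm_coe_le_norm x).trans hf)

lemma bddAbove_tvDist_set [OpensMeasurableSpace X] (μ ν : Measure X) [IsProbabilityMeasure μ]
    [IsProbabilityMeasure ν] :
    BddAbove {r : ℝ | ∃ f : C(X, ℝ), ‖f‖ ≤ 1 ∧ r = |(∫ x, f x ∂μ) - ∫ x, f x ∂ν|} := by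
  refine ⟨2, ?_⟩
  rintro r ⟨f, hf, rfl⟩
  linarith [abs_sub (∫ x, f x ∂μ) (∫ x, f x ∂ν), abs_integral_le_one_of_norm_le_one hf μ,
    abs_integral_le_one_of_norm_le_one hf ν]

lemma abs_integral_sub_le_tvDist [OpensMeasurableSpace X] (μ ν : Measure X)
    [IsProbabilityMeasure μ] [IsProbabilityMeasure ν] {f : C(X, ℝ)} (hf : ‖f‖ ≤ 1) :
    |(∫ x, f x ∂μ) - ∫ x, f x ∂ν| ≤ tvDist μ ν :=
  le_csSup (bddAbove_tvDist_set μ ν) ⟨f, hf, rfl⟩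

lemma tvDist_nonneg [OpensMeasurableSpace X] (μ ν : Measure X) [IsProbabilityMeasure μ]
    [IsProbabilityMeasure ν] : 0 ≤ tvDist μ ν :=
  (abs_nonneg _).trans (abs_integral_sub_le_tvDist μ ν (f := 0) (by simp))

lemma tvDist_le_of_forall {μ ν : Measure X} {c : ℝ}
    (h : ∀ f : C(X, ℝ), ‖f‖ ≤ 1 → |(∫ x, f x ∂μ) - ∫ x, f x ∂ν| ≤ c) :
    tvDist μ ν ≤ c :=
  csSup_le ⟨0, 0, by simp⟩ fun _ ⟨f, hf, hr⟩ => hr ▸ h f hf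

lemma tvDist_comm (μ ν : Measure X) : tvDist μ ν = tvDist ν μ := by
  unfold tvDist
  congr 1
  ext r
  constructor <;> rintro ⟨f, hf, rfl⟩ <;> exact ⟨f, hf, abs_sub_comm _ _⟩

lemma tvDist_triangle [OpensMeasurableSpace X] (μ κ ν : Measure X) [IsProbabilityMeasure μ]
    [IsProbabilityMeasure κ] [IsProbabilityMeasure ν] :
    tvDist μ ν ≤ tvDist μ κ + tvDist κ ν :=
  tvDist_le_of_forall fun f hf => (abs_sub_le _ (∫ x, f x ∂κ) _).trans <|
    add_le_add (abs_integral_sub_le_tvDist μ κ hf) (abs_integral_sub_le_tvDist κ ν hf)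

lemma abs_integral_sub_le_tvDist_add_tvDist [OpensMeasurableSpace X] (μ ν κ : Measure X)
    [IsProbabilityMeasure μ] [IsProbabilityMeasure ν] [IsProbabilityMeasure κ]
    {f : C(X, ℝ)} (hf : ‖f‖ ≤ 1) :
    |(∫ x, f x ∂μ) - ∫ x, f x ∂ν| ≤ tvDist μ κ + tvDist ν κ :=
  (abs_integral_sub_le_tvDist μ ν hf).trans (tvDist_comm ν κ ▸ tvDist_triangle μ κ ν)

end TotalVariation

lemma ContinuousLinearMap.norm_apply_le_of_map_one_of_nonneg {X : Type*} [TopologicalSpace X]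
    [CompactSpace X] {T : C(X, ℝ) →L[ℝ] C(X, ℝ)} (hT1 : T 1 = 1)
    (hTpos : ∀ f : C(X, ℝ), 0 ≤ f → 0 ≤ T f) (f : C(X, ℝ)) : ‖T f‖ ≤ ‖f‖ := by
  have hmono : ∀ g h : C(X, ℝ), g ≤ h → T g ≤ T h := fun g h hgh =>
    sub_nonneg.1 (map_sub T h g ▸ hTpos _ (sub_nonneg.2 hgh))
  have hbound (y : X) : |f y| ≤ ‖f‖ := f.norm_coe_le_norm y
  have hupper := hmono f (‖f‖ • 1) fun y => by simpa using (abs_le.1 (hbound y)).2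
  have hlower := hmono (-(‖f‖ • 1)) f fun y => by simpa using (abs_le.1 (hbound y)).1
  rw [map_neg, map_smul, hT1] at hlower
  rw [map_smul, hT1] at hupper
  refine (ContinuousMap.norm_le _ (norm_nonneg f)).2 fun x => abs_le.2 ⟨?_, ?_⟩
  · simpa using hlower x
  · simpa using hupper x

lemma isProbabilityMeasure_iterate {X : Type*} [MeasurableSpace X]
    {T' : Measure X → Measure X}
    (hprob : ∀ ν : Measure X, IsProbabilityMeasure ν → IsProbabilityMeasure (T' ν))
    (ν : Measure X) [IsProbabilityMeasure ν] (m : ℕ) : IsProbabilityMeasure (T'^[m] ν) := by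
  induction m with
  | zero => assumption
  | succ m ih => rw [Function.iterate_succ_apply']; exact hprob _ ih

section DualOperator

variable {X : Type*} [TopologicalSpace X] [CompactSpace X] [MeasurableSpace X]
  {T : C(X, ℝ) →L[ℝ] C(X, ℝ)} {T' : Measure X → Measure X}

lemma pow_apply_eq_integral_iterate_dirac [OpensMeasurableSpace X]
    (hdual : ∀ (ν : Measure X) (f : C(X, ℝ)), (∫ x, (T f) x ∂ν) = ∫ x, f x ∂(T' ν))
    (m : ℕ) (f : C(X, ℝ)) (x : X) :
    (T ^ m) f x = ∫ y, f y ∂(T'^[m] (Measure.dirac x)) := by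
  induction m generalizing f with
  | zero => simp [integral_dirac' _ _ f.continuous.stronglyMeasurable]
  | succ m ih =>
    rw [pow_succ, mul_apply_eq_comp, ih, hdual, Function.iterate_succ_apply']

variable [OpensMeasurableSpace X] (hT1 : T 1 = 1) (hTpos : ∀ f : C(X, ℝ), 0 ≤ f → 0 ≤ T f)
  (hdual : ∀ (ν : Measure X) (f : C(X, ℝ)), (∫ x, (T f) x ∂ν) = ∫ x, f x ∂(T' ν))
  (hprob : ∀ ν : Measure X, IsProbabilityMeasure ν → IsProbabilityMeasure (T' ν))
include hT1 hTpos hdual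

lemma tvDist_dual_le (μ ν : Measure X) [IsProbabilityMeasure μ] [IsProbabilityMeasure ν] :
    tvDist (T' μ) (T' ν) ≤ tvDist μ ν :=
  tvDist_le_of_forall fun f hf => hdual μ f ▸ hdual ν f ▸ abs_integral_sub_le_tvDist μ ν
    ((ContinuousLinearMap.norm_apply_le_of_map_one_of_nonneg hT1 hTpos f).trans hf)

include hprob

lemma tvDist_iterate_dual_le (μ ν : Measure X) [IsProbabilityMeasure μ] [IsProbabilityMeasure ν]
    (m : ℕ) : tvDist (T'^[m] μ) (T'^[m] ν) ≤ tvDist μ ν := by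
  induction m with
  | zero => rfl
  | succ m ih =>
    have := isProbabilityMeasure_iterate hprob μ m
    have := isProbabilityMeasure_iterate hprob ν m
    rw [Function.iterate_succ_apply', Function.iterate_succ_apply']
    exact (tvDist_dual_le hT1 hTpos hdual _ _).trans ih

lemma tendstoUniformlyOn_tvDist_iterate_dirac {Xl : Set X}
    (hcont : ∀ x ∈ Xl, ∀ ε > 0, ∃ U : Set X, IsOpen U ∧ x ∈ U ∧
      ∀ y ∈ U ∩ Xl, tvDist (T' (Measure.dirac y)) (T' (Measure.dirac x)) < ε)
    (lam : Measure X) [IsProbabilityMeasure lam]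
    (hconv : ∀ x ∈ Xl, Tendsto (fun m => tvDist (T'^[m] (Measure.dirac x)) lam) atTop (nhds 0))
    {K : Set X} (hK : IsCompact K) (hKXl : K ⊆ Xl) :
    TendstoUniformlyOn (fun m x => tvDist (T'^[m] (Measure.dirac x)) lam) 0 atTop K := by
  refine (tendstoLocallyUniformlyOn_iff_tendstoUniformlyOn_of_compact hK).1 <|
    Metric.tendstoLocallyUniformlyOn_iff.2 fun ε hε x hx => ?_
  obtain ⟨U, hUopen, hxU, hU⟩ := hcont x (hKXl hx) (ε / 2) (half_pos hε)
  have hsmall : ∀ᶠ m in atTop, 1 ≤ m ∧ tvDist (T'^[m] (Measure.dirac x)) lam < ε / 2 :=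
    (eventually_ge_atTop 1).and <| hconv x (hKXl hx) |>.eventually (gt_mem_nhds (half_pos hε))
  refine ⟨K ∩ U, inter_mem_nhdsWithin K (hUopen.mem_nhds hxU), hsmall.mono ?_⟩
  rintro m ⟨hm, hxm⟩ y ⟨hyK, hyU⟩
  obtain ⟨k, rfl⟩ := Nat.exists_eq_add_of_le' hm
  have := isProbabilityMeasure_iterate hprob (Measure.dirac x) (k + 1)
  have := isProbabilityMeasure_iterate hprob (Measure.dirac y) (k + 1)
  have hclose : tvDist (T'^[k + 1] (Measure.dirac y)) (T'^[k + 1] (Measure.dirac x)) < ε / 2 := by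
    have := hprob (Measure.dirac x) inferInstance
    have := hprob (Measure.dirac y) inferInstance
    simp only [Function.iterate_succ_apply]
    exact (tvDist_iterate_dual_le hT1 hTpos hdual hprob _ _ k).trans_lt (hU y ⟨hyU, hKXl hyK⟩)
  rw [Pi.zero_apply, dist_zero_left, Real.norm_eq_abs, abs_of_nonneg (tvDist_nonneg _ _)]
  calc tvDist (T'^[k + 1] (Measure.dirac y)) lam
      ≤ tvDist (T'^[k + 1] (Measure.dirac y)) (T'^[k + 1] (Measure.dirac x))
        + tvDist (T'^[k + 1] (Measure.dirac x)) lam := tvDist_triangle _ _ _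
    _ < ε := by linarith

end DualOperator

theorem markov_difference_uniformly_small_off_boundary_general
    {X : Type*} [TopologicalSpace X] [CompactSpace X]
    [MeasurableSpace X] [BorelSpace X]
    -- `T` is a Markov operator on `C(X)`
    (T : C(X, ℝ) →L[ℝ] C(X, ℝ))
    (hT1 : T 1 = 1)
    (hTpos : ∀ f : C(X, ℝ), 0 ≤ f → 0 ≤ T f)
    -- `T'` is its dual, acting on Borel measures
    (T' : Measure X → Measure X)
    (hdual : ∀ (ν : Measure X) (f : C(X, ℝ)), (∫ x, (T f) x ∂ν) = ∫ x, f x ∂(T' ν))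
    (hprob : ∀ ν : Measure X, IsProbabilityMeasure ν → IsProbabilityMeasure (T' ν))
    -- the open dense set `X_λ`
    (Xl : Set X) (hXlopen : IsOpen Xl)
    -- (1) `x ↦ T'δ_x` maps `X_λ` to `P(X_λ)` and is continuous in total variation on `X_λ`
    (h1cont : ∀ x ∈ Xl, ∀ ε > 0, ∃ U : Set X, IsOpen U ∧ x ∈ U ∧
      ∀ y ∈ U ∩ Xl, tvDist (T' (Measure.dirac y)) (T' (Measure.dirac x)) < ε)
    -- (2) the `T`-invariant Radon probability `λ` concentrated on `X_λ`
    (lam : Measure X) (hlamprob : IsProbabilityMeasure lam)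
    (h2conv : ∀ ν : Measure X, IsProbabilityMeasure ν → ν Xlᶜ = 0 →
      Tendsto (fun m => tvDist (T'^[m] ν) lam) atTop (nhds 0)) :
    ∀ V : Set X, IsOpen V → Xlᶜ ⊆ V →
      ∀ ε > 0, ∃ M : ℕ, ∀ m ≥ M, ∀ f : C(X, ℝ), ‖f‖ ≤ 1 →
        ∀ x ∈ Vᶜ, |((T ^ (m+1)) f) x - ((T ^ m) f) x| ≤ ε := by
  intro V hVopen hXlV ε hε
  have hVXl : Vᶜ ⊆ Xl := compl_subset_comm.1 hXlV
  have hdirac : ∀ x ∈ Xl,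
      Tendsto (fun m => tvDist (T'^[m] (Measure.dirac x)) lam) atTop (nhds 0) :=
    fun x hx => h2conv (Measure.dirac x) inferInstance <| by
      rw [Measure.dirac_apply' _ hXlopen.isClosed_compl.measurableSet]
      simp [hx]
  have hunif := tendstoUniformlyOn_tvDist_iterate_dirac hT1 hTpos hdual hprob h1cont lam hdirac
    hVopen.isClosed_compl.isCompact hVXl
  obtain ⟨M, hM⟩ :=
    eventually_atTop.1 (Metric.tendstoUniformlyOn_iff.1 hunif (ε / 2) (half_pos hε))
  refine ⟨M, fun m hm f hf x hx => ?_⟩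
  have := isProbabilityMeasure_iterate hprob (Measure.dirac x) m
  have := isProbabilityMeasure_iterate hprob (Measure.dirac x) (m + 1)
  have hsmall (n : ℕ) (hn : M ≤ n) : tvDist (T'^[n] (Measure.dirac x)) lam < ε / 2 :=
    (le_abs_self _).trans_lt (by simpa using hM n hn x hx)
  rw [pow_apply_eq_integral_iterate_dirac hdual, pow_apply_eq_integral_iterate_dirac hdual]
  linarith [abs_integral_sub_le_tvDist_add_tvDist (T'^[m + 1] (Measure.dirac x))
    (T'^[m] (Measure.dirac x)) lam hf, hsmall m hm, hsmall (m + 1) (by omega)]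

/-- For a Markov operator `T` on `C(X)` (`X` compact Hausdorff) satisfying conditions
(1) and (2), for every open `V ⊇ X \ X_λ` one has
`lim_m sup_{‖f‖≤1} sup_{x ∈ X\V} |T^{m+1}f(x) − T^m f(x)| = 0`. -/
theorem markov_difference_uniformly_small_off_boundary
    {X : Type*} [TopologicalSpace X] [CompactSpace X] [T2Space X]
    [MeasurableSpace X] [BorelSpace X]
    -- `T` is a Markov operator on `C(X)`
    (T : C(X, ℝ) →L[ℝ] C(X, ℝ))
    (hT1 : T 1 = 1)
    (hTpos : ∀ f : C(X, ℝ), 0 ≤ f → 0 ≤ T f)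
    -- `T'` is its dual, acting on Borel measures
    (T' : Measure X → Measure X)
    (hdual : ∀ (ν : Measure X) (f : C(X, ℝ)), (∫ x, (T f) x ∂ν) = ∫ x, f x ∂(T' ν))
    (hprob : ∀ ν : Measure X, IsProbabilityMeasure ν → IsProbabilityMeasure (T' ν))
    -- the open dense set `X_λ`
    (Xl : Set X) (hXlopen : IsOpen Xl) (hXldense : Dense Xl)
    -- (1) `x ↦ T'δ_x` maps `X_λ` to `P(X_λ)` and is continuous in total variation on `X_λ`
    (h1conc : ∀ x ∈ Xl, T' (Measure.dirac x) Xlᶜ = 0)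
    (h1cont : ∀ x ∈ Xl, ∀ ε > 0, ∃ U : Set X, IsOpen U ∧ x ∈ U ∧
      ∀ y ∈ U ∩ Xl, tvDist (T' (Measure.dirac y)) (T' (Measure.dirac x)) < ε)
    -- (2) the `T`-invariant Radon probability `λ` concentrated on `X_λ`
    (lam : Measure X) (hlamprob : IsProbabilityMeasure lam) (hlamRadon : lam.Regular)
    (hlamconc : lam Xlᶜ = 0)
    (hlaminv : T' lam = lam)
    (h2conv : ∀ ν : Measure X, IsProbabilityMeasure ν → ν Xlᶜ = 0 →
      Tendsto (fun m => tvDist (T'^[m] ν) lam) atTop (nhds 0)) :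
    ∀ V : Set X, IsOpen V → Xlᶜ ⊆ V →
      ∀ ε > 0, ∃ M : ℕ, ∀ m ≥ M, ∀ f : C(X, ℝ), ‖f‖ ≤ 1 →
        ∀ x ∈ Vᶜ, |((T ^ (m+1)) f) x - ((T ^ m) f) x| ≤ ε :=
  markov_difference_uniformly_small_off_boundary_general T hT1 hTpos T' hdual hprob Xl hXlopen
    h1cont lam hlamprob h2conv
end
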